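/- arXiv:1705.01601 — 2 statements merged into one kernel-verified Lean document; each statement's English description precedes it below -/
import Mathlib

section
/- Merging increases Gaussian model entropy: let X ⊂ ℝ^N be a finite data set partitioned into clusters Y₁ and Y₂ whose sample covariance matrices Σ₁, Σ₂ are positive definite, and let p = |Y₁|/|X|. Then p·H(N(μ₁,Σ₁)) + (1−p)·H(N(μ₂,Σ₂)) ≤ H(N(μ_X,Σ_X)), where H(N(μ,Σ)) = (N/2)·ln(2πe) + (1/2)·ln det Σ is the differential entropy of the Gaussian N(μ,Σ). -/
open Matrix

noncomputable def sampleMean {N : ℕ} (S : Finset (Fin N → ℝ)) : Fin N → ℝ :=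
  (S.card : ℝ)⁻¹ • ∑ x ∈ S, x

noncomputable def sampleCov {N : ℕ} (S : Finset (Fin N → ℝ)) : Matrix (Fin N) (Fin N) ℝ :=
  (S.card : ℝ)⁻¹ • ∑ x ∈ S, vecMulVec (x - sampleMean S) (x - sampleMean S)

/-- Differential entropy of the Gaussian `N(μ, Σ)` on `ℝ^N`:
`(N/2)·ln(2πe) + (1/2)·ln det Σ`. -/
noncomputable def gaussEntropy (N : ℕ) (S : Matrix (Fin N) (Fin N) ℝ) : ℝ :=
  (N : ℝ) / 2 * Real.log (2 * Real.pi * Real.exp 1) + 1 / 2 * Real.log S.det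

/-!
By the law of total covariance, `Σ_X = p Σ₁ + (1 - p) Σ₂ + p (1 - p) d dᵀ` with `d = μ₁ - μ₂`.
Since `log det` is concave on positive definite matrices,
`p log det Σ₁ + (1 - p) log det Σ₂ ≤ log det (p Σ₁ + (1 - p) Σ₂)`, and adding the positive
semidefinite between-cluster term `p (1 - p) d dᵀ` can only increase the determinant.
Both determinant facts come from simultaneously diagonalising a positive definite `A` and a
positive semidefinite `B`: `det (a A + b B) = det A * ∏ i, (a + b μᵢ)` with `μᵢ ≥ 0`, after
which they reduce to the weighted AM-GM inequality and to `1 ≤ ∏ i, (1 + μᵢ)`.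
-/

open Finset

lemma Matrix.sum_vecMulVec {ι m n α : Type*} [NonUnitalNonAssocSemiring α] (s : Finset ι)
    (f : ι → m → α) (v : n → α) :
    ∑ i ∈ s, vecMulVec (f i) v = vecMulVec (∑ i ∈ s, f i) v := by
  ext; simp [vecMulVec_apply, Matrix.sum_apply, Finset.sum_mul]

lemma Matrix.vecMulVec_sum {ι m n α : Type*} [NonUnitalNonAssocSemiring α] (s : Finset ι)
    (v : m → α) (f : ι → n → α) :
    ∑ i ∈ s, vecMulVec v (f i) = vecMulVec v (∑ i ∈ s, f i) := by
  ext; simp [vecMulVec_apply, Matrix.sum_apply, Finset.mul_sum]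

section SampleStatistics

variable {N : ℕ} {S : Finset (Fin N → ℝ)}

lemma card_smul_sampleMean (hS : S.Nonempty) : (#S : ℝ) • sampleMean S = ∑ x ∈ S, x := by
  rw [sampleMean, smul_inv_smul₀ (by positivity)]

lemma card_smul_sampleCov (hS : S.Nonempty) :
    (#S : ℝ) • sampleCov S = ∑ x ∈ S, vecMulVec (x - sampleMean S) (x - sampleMean S) := by
  rw [sampleCov, smul_inv_smul₀ (by positivity)]

lemma sum_sub_sampleMean (hS : S.Nonempty) : ∑ x ∈ S, (x - sampleMean S) = 0 := by
  rw [sum_sub_distrib, ← card_smul_sampleMean hS, sum_const, Nat.cast_smul_eq_nsmul, sub_self]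

lemma sum_vecMulVec_sub_eq (hS : S.Nonempty) (m : Fin N → ℝ) :
    ∑ x ∈ S, vecMulVec (x - m) (x - m)
      = (#S : ℝ) • (sampleCov S + vecMulVec (sampleMean S - m) (sampleMean S - m)) := by
  have hsplit : ∀ x : Fin N → ℝ, vecMulVec (x - m) (x - m)
      = vecMulVec (x - sampleMean S) (x - sampleMean S)
        + vecMulVec (x - sampleMean S) (sampleMean S - m)
        + vecMulVec (sampleMean S - m) (x - sampleMean S)
        + vecMulVec (sampleMean S - m) (sampleMean S - m) := fun x => by
    rw [← sub_add_sub_cancel x (sampleMean S) m, add_vecMulVec, vecMulVec_add, vecMulVec_add]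
    abel
  rw [sum_congr rfl fun x _ => hsplit x]
  simp only [sum_add_distrib, sum_vecMulVec, vecMulVec_sum, sum_sub_sampleMean hS,
    zero_vecMulVec, vecMulVec_zero, sum_const, ← card_smul_sampleCov hS]
  module

lemma card_smul_sampleMean_union {Y₁ Y₂ : Finset (Fin N → ℝ)} (h₁ : Y₁.Nonempty)
    (h₂ : Y₂.Nonempty) (hdisj : Disjoint Y₁ Y₂) :
    (#(Y₁ ∪ Y₂) : ℝ) • sampleMean (Y₁ ∪ Y₂)
      = (#Y₁ : ℝ) • sampleMean Y₁ + (#Y₂ : ℝ) • sampleMean Y₂ := by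
  rw [card_smul_sampleMean (h₁.mono subset_union_left), sum_union hdisj,
    card_smul_sampleMean h₁, card_smul_sampleMean h₂]

/-- The law of total covariance for a two-block partition. -/
lemma sampleCov_union {Y₁ Y₂ : Finset (Fin N → ℝ)} (h₁ : Y₁.Nonempty) (h₂ : Y₂.Nonempty)
    (hdisj : Disjoint Y₁ Y₂) :
    sampleCov (Y₁ ∪ Y₂)
      = (#Y₁ / #(Y₁ ∪ Y₂) : ℝ) • sampleCov Y₁ + (#Y₂ / #(Y₁ ∪ Y₂) : ℝ) • sampleCov Y₂
        + (#Y₁ * #Y₂ / #(Y₁ ∪ Y₂) ^ 2 : ℝ) •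
            vecMulVec (sampleMean Y₁ - sampleMean Y₂) (sampleMean Y₁ - sampleMean Y₂) := by
  have hX : (Y₁ ∪ Y₂).Nonempty := h₁.mono subset_union_left
  have hn : (#(Y₁ ∪ Y₂) : ℝ) ≠ 0 := by positivity
  have hcard : (#(Y₁ ∪ Y₂) : ℝ) = #Y₁ + #Y₂ := by
    rw [card_union_of_disjoint hdisj, Nat.cast_add]
  have hmean : sampleMean (Y₁ ∪ Y₂)
      = (#(Y₁ ∪ Y₂) : ℝ)⁻¹ • ((#Y₁ : ℝ) • sampleMean Y₁ + (#Y₂ : ℝ) • sampleMean Y₂) := by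
    rw [← card_smul_sampleMean_union h₁ h₂ hdisj, inv_smul_smul₀ hn]
  rw [← inv_smul_smul₀ hn (sampleCov (Y₁ ∪ Y₂)), card_smul_sampleCov hX, sum_union hdisj,
    sum_vecMulVec_sub_eq h₁, sum_vecMulVec_sub_eq h₂, hmean]
  simp only [vecMulVec_add, add_vecMulVec, vecMulVec_sub, sub_vecMulVec, smul_vecMulVec,
    vecMulVec_smul]
  rw [hcard] at hn ⊢
  match_scalars <;> field_simp <;> ring

end SampleStatistics

namespace Matrix

variable {n : Type*} [Fintype n] [DecidableEq n]

lemma IsHermitian.det_smul_one_add_smul {M : Matrix n n ℝ} (hM : M.IsHermitian) (a b : ℝ) :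
    (a • 1 + b • M).det = ∏ i, (a + b * hM.eigenvalues i) := by
  set U := hM.eigenvectorUnitary
  have hdiag : a • (1 : Matrix n n ℝ) + b • diagonal (RCLike.ofReal ∘ hM.eigenvalues)
      = diagonal fun i => a + b * hM.eigenvalues i := by
    ext i j
    rcases eq_or_ne i j with rfl | hij
    · simp
    · simp [hij]
  have hconj : a • 1 + b • M
      = Unitary.conjStarAlgAut ℝ _ U (diagonal fun i => a + b * hM.eigenvalues i) := by
    rw [← hdiag, map_add, map_smul, map_smul, map_one, ← hM.spectral_theorem]
  rw [hconj, Unitary.conjStarAlgAut_apply, det_mul_comm, ← mul_assoc,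
    Unitary.coe_star_mul_self, one_mul, det_diagonal]

open scoped MatrixOrder in
/-- Simultaneous diagonalisation: the `μ i` are the eigenvalues of `A^{-1/2} B A^{-1/2}`. -/
lemma PosDef.exists_det_smul_add_smul {A B : Matrix n n ℝ} (hA : A.PosDef)
    (hB : B.PosSemidef) :
    ∃ μ : n → ℝ, (∀ i, 0 ≤ μ i) ∧
      ∀ a b : ℝ, (a • A + b • B).det = A.det * ∏ i, (a + b * μ i) := by
  set S := CFC.sqrt A
  have hSS : S * S = A := CFC.sqrt_mul_sqrt_self A hA.posSemidef.nonneg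
  have hS : IsUnit S.det := by
    refine isUnit_iff_ne_zero.2 fun h => hA.det_pos.ne' ?_
    rw [← hSS, det_mul, h, mul_zero]
  have hSinv : (S⁻¹)ᴴ = S⁻¹ := by
    rw [conjTranspose_nonsing_inv, (CFC.sqrt_nonneg A).posSemidef.1.eq]
  have hM : (S⁻¹ * B * S⁻¹).PosSemidef := by
    simpa only [hSinv] using hB.mul_mul_conjTranspose_same S⁻¹
  refine ⟨hM.1.eigenvalues, hM.eigenvalues_nonneg, fun a b => ?_⟩
  have hfactor : a • A + b • B = S * (a • 1 + b • (S⁻¹ * B * S⁻¹)) * S := by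
    simp only [mul_add, add_mul, Matrix.mul_smul, Matrix.smul_mul, mul_one, hSS, mul_assoc,
      nonsing_inv_mul _ hS, mul_nonsing_inv_cancel_left _ _ hS]
  rw [hfactor, det_mul, det_mul, hM.1.det_smul_one_add_smul, ← hSS, det_mul]
  ring

lemma PosDef.det_le_det_add {A W : Matrix n n ℝ} (hA : A.PosDef) (hW : W.PosSemidef) :
    A.det ≤ (A + W).det := by
  obtain ⟨μ, hμ, hdet⟩ := hA.exists_det_smul_add_smul hW
  have hsum : (A + W).det = A.det * ∏ i, (1 + μ i) := by simpa using hdet 1 1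
  rw [hsum]
  exact le_mul_of_one_le_right hA.det_pos.le (one_le_prod fun i _ => by linarith [hμ i])

lemma PosDef.det_rpow_mul_det_rpow_le {A B : Matrix n n ℝ} (hA : A.PosDef) (hB : B.PosDef)
    {p q : ℝ} (hp : 0 ≤ p) (hq : 0 ≤ q) (hpq : p + q = 1) :
    A.det ^ p * B.det ^ q ≤ (p • A + q • B).det := by
  obtain ⟨μ, hμ, hdet⟩ := hA.exists_det_smul_add_smul hB.posSemidef
  have hBdet : B.det = A.det * ∏ i, μ i := by simpa using hdet 0 1
  have hA₀ := hA.det_pos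
  calc A.det ^ p * B.det ^ q = A.det * ∏ i, μ i ^ q := by
        rw [hBdet, Real.mul_rpow hA₀.le (prod_nonneg fun i _ => hμ i),
          ← Real.finsetProd_rpow _ _ fun i _ => hμ i, ← mul_assoc, ← Real.rpow_add hA₀, hpq,
          Real.rpow_one]
    _ ≤ A.det * ∏ i, (p + q * μ i) := by
        gcongr with i
        · exact fun i _ => Real.rpow_nonneg (hμ i) q
        · simpa using Real.geom_mean_le_arith_mean2_weighted hp hq zero_le_one (hμ i) hpq
    _ = (p • A + q • B).det := (hdet p q).symm

lemma PosDef.mul_log_det_add_mul_log_det_le {A B : Matrix n n ℝ} (hA : A.PosDef)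
    (hB : B.PosDef) {p q : ℝ} (hp : 0 ≤ p) (hq : 0 ≤ q) (hpq : p + q = 1) :
    p * Real.log A.det + q * Real.log B.det ≤ Real.log (p • A + q • B).det := by
  have hA' := Real.rpow_pos_of_pos hA.det_pos p
  have hB' := Real.rpow_pos_of_pos hB.det_pos q
  rw [← Real.log_rpow hA.det_pos, ← Real.log_rpow hB.det_pos, ← Real.log_mul hA'.ne' hB'.ne']
  exact Real.log_le_log (mul_pos hA' hB') (hA.det_rpow_mul_det_rpow_le hB hp hq hpq)

end Matrix

theorem merging_increases_gauss_entropy {N : ℕ} (Y₁ Y₂ : Finset (Fin N → ℝ))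
    (h₁ : Y₁.Nonempty) (h₂ : Y₂.Nonempty) (hdisj : Disjoint Y₁ Y₂)
    (X : Finset (Fin N → ℝ)) (hX : X = Y₁ ∪ Y₂)
    (hc₁ : (sampleCov Y₁).PosDef) (hc₂ : (sampleCov Y₂).PosDef)
    (p : ℝ) (hp : p = (Y₁.card : ℝ) / X.card) :
    p * gaussEntropy N (sampleCov Y₁) + (1 - p) * gaussEntropy N (sampleCov Y₂)
      ≤ gaussEntropy N (sampleCov X) := by
  subst hX
  have hn : (0 : ℝ) < #(Y₁ ∪ Y₂) := by
    exact_mod_cast card_pos.2 (h₁.mono subset_union_left)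
  have hq : 1 - p = #Y₂ / #(Y₁ ∪ Y₂) := by
    rw [hp, eq_div_iff hn.ne', sub_mul, div_mul_cancel₀ _ hn.ne', card_union_of_disjoint hdisj]
    push_cast
    ring
  have hp₀ : 0 < p := hp ▸ div_pos (by exact_mod_cast card_pos.2 h₁) hn
  have hq₀ : 0 < 1 - p := hq ▸ div_pos (by exact_mod_cast card_pos.2 h₂) hn
  set d := sampleMean Y₁ - sampleMean Y₂
  have hcov : sampleCov (Y₁ ∪ Y₂)
      = (p • sampleCov Y₁ + (1 - p) • sampleCov Y₂) + (p * (1 - p)) • vecMulVec d d := by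
    rw [sampleCov_union h₁ h₂ hdisj, hq, hp, div_mul_div_comm, sq]
  have hmix : (p • sampleCov Y₁ + (1 - p) • sampleCov Y₂).PosDef :=
    (hc₁.smul hp₀).add (hc₂.smul hq₀)
  have hlogdet : p * Real.log (sampleCov Y₁).det + (1 - p) * Real.log (sampleCov Y₂).det
      ≤ Real.log (sampleCov (Y₁ ∪ Y₂)).det :=
    calc _ ≤ Real.log (p • sampleCov Y₁ + (1 - p) • sampleCov Y₂).det :=
          hc₁.mul_log_det_add_mul_log_det_le hc₂ hp₀.le hq₀.le (add_sub_cancel p 1)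
      _ ≤ _ := by
          rw [hcov]
          exact Real.log_le_log hmix.det_pos <| hmix.det_le_det_add <|
            (posSemidef_vecMulVec_self_star d).smul (mul_pos hp₀ hq₀).le
  unfold gaussEntropy
  linear_combination hlogdet / 2
end

section
/- Robustness to random labeling for β < 1: let Y be a proportional coarsening of Z and Ỹ a coarsening of Y with H(Y) > H(Ỹ). If β < 1, then H(Y) + β·H(Z|Y) > H(Ỹ) + β·H(Z|Ỹ). -/
/-- Entropy of a partition `Y` of a finite set `X`, with empirical probabilities. -/
noncomputable def partEntropy {α : Type*} (X : Finset α) {k : ℕ} (Y : Fin k → Finset α) : ℝ :=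
  -∑ i, ((Y i).card : ℝ) / X.card * Real.log (((Y i).card : ℝ) / X.card)

/-- Conditional entropy `H(Z|Y) = Σᵢ (|Yᵢ|/|X|)·H(Z | Yᵢ ∩ X_ℓ)` with empirical
probabilities (with the convention `0·log 0 = 0`, automatic since `Real.log 0 = 0`). -/
noncomputable def condEntropy {α : Type*} [DecidableEq α] (X Xl : Finset α)
    {k m : ℕ} (Y : Fin k → Finset α) (Z : Fin m → Finset α) : ℝ :=
  ∑ i, ((Y i).card : ℝ) / X.card *
    (-∑ j, ((Y i ∩ Z j).card : ℝ) / ((Y i ∩ Xl).card) *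
        Real.log (((Y i ∩ Z j).card : ℝ) / ((Y i ∩ Xl).card)))

/-!
Writing `H` as a sum of `negMulLog`s, the identity
`negMulLog (p * q) = q * negMulLog p + p * negMulLog q` gives the chain rule
`H(Y) + H(Z|Y) = H(Y, Z)`; proportionality of `Y` is what lets the weights `|Yᵢ|/|X|` of
`H(Z|Y)` be read on `X_ℓ`. When `Z` refines `Y` the joint entropy is just `H(Z)`, so
`H(Y) + H(Z|Y) = H(Ỹ) + H(Z|Ỹ)`, and the claim becomes `(1 - β) (H(Y) - H(Ỹ)) > 0`.
-/

open Finset Real Function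

theorem card_inter_biUnion {α ι : Type*} [DecidableEq α] {s : Finset ι} {Y : ι → Finset α}
    (hY : (s : Set ι).PairwiseDisjoint Y) (S : Finset α) :
    #(S ∩ s.biUnion Y) = ∑ i ∈ s, #(S ∩ Y i) := by
  rw [inter_biUnion, card_biUnion]
  exact hY.mono fun i => inter_subset_right

section Coarsening

variable {α ι κ κ' : Type*} [DecidableEq α] [Fintype ι] [DecidableEq κ]

def coarsening (Y : ι → Finset α) (g : ι → κ) (r : κ) : Finset α :=
  (Finset.univ.filter (fun i => g i = r)).biUnion Y

theorem coarsening_pairwise_disjoint {Y : ι → Finset α} (hY : Pairwise (Disjoint on Y))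
    (g : ι → κ) : Pairwise (Disjoint on coarsening Y g) := by
  intro r r' hrr'
  simp only [onFun, coarsening, disjoint_biUnion_left, disjoint_biUnion_right]
  intro i hi i' hi'
  simp only [mem_filter, mem_univ, true_and] at hi hi'
  exact hY fun h => hrr' (hi ▸ hi' ▸ congrArg g h)

theorem coarsening_refines {Y : ι → Finset α} {Z : κ' → Finset α} (hZY : ∀ j, ∃ i, Z j ⊆ Y i)
    (g : ι → κ) (j : κ') : ∃ r, Z j ⊆ coarsening Y g r :=
  let ⟨i, hi⟩ := hZY j
  ⟨g i, hi.trans (subset_biUnion_of_mem Y (by simp))⟩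

theorem coarsening_proportional {Y : ι → Finset α} (hY : Pairwise (Disjoint on Y))
    {X Xl : Finset α} (hprop : ∀ i, (#(Y i) : ℝ) / #X = #(Y i ∩ Xl) / #Xl)
    (g : ι → κ) (r : κ) :
    (#(coarsening Y g r) : ℝ) / #X = #(coarsening Y g r ∩ Xl) / #Xl := by
  have hdisj := hY.set_pairwise (Finset.univ.filter (fun i => g i = r) : Set ι)
  rw [coarsening, inter_comm, card_inter_biUnion hdisj, card_biUnion hdisj]
  push_cast
  rw [sum_div, sum_div]
  exact sum_congr rfl fun i _ => by rw [hprop i, inter_comm]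

end Coarsening

theorem sum_negMulLog_div_eq {ι : Type*} (s : Finset ι) {c : ι → ℝ} (hc : ∀ j ∈ s, 0 ≤ c j)
    (N : ℝ) :
    ∑ j ∈ s, negMulLog (c j / N) = negMulLog ((∑ j ∈ s, c j) / N)
      + (∑ j ∈ s, c j) / N * ∑ j ∈ s, negMulLog (c j / ∑ j ∈ s, c j) := by
  set a := ∑ j ∈ s, c j with ha
  rcases eq_or_ne a 0 with h0 | h0
  · have hc0 : ∀ j ∈ s, c j = 0 := (sum_eq_zero_iff_of_nonneg hc).1 h0
    simp +contextual [h0, hc0]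
  · have hfactor : ∀ j, c j / N = a / N * (c j / a) := fun j => by field_simp
    simp only [hfactor, negMulLog_mul, sum_add_distrib, ← sum_mul, ← mul_sum, ← sum_div, ← ha,
      div_self h0, one_mul]

theorem sum_sum_card_inter_of_refines {α ι κ M : Type*} [DecidableEq α] [Fintype ι] [Fintype κ]
    [AddCommMonoid M] {Y : ι → Finset α} {Z : κ → Finset α} (hY : Pairwise (Disjoint on Y))
    (hZY : ∀ j, ∃ i, Z j ⊆ Y i) (f : ℕ → M) (hf : f 0 = 0) :
    ∑ i, ∑ j, f #(Y i ∩ Z j) = ∑ j, f #(Z j) := by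
  rw [sum_comm]
  refine sum_congr rfl fun j _ => ?_
  obtain ⟨i₀, hi₀⟩ := hZY j
  rw [Fintype.sum_eq_single i₀, inter_eq_right.2 hi₀]
  intro i hi
  rw [disjoint_iff_inter_eq_empty.1 ((hY hi).mono_right hi₀), card_empty, hf]

section Entropy

variable {α : Type*} {k m : ℕ}

theorem partEntropy_eq_sum_negMulLog (X : Finset α) (Y : Fin k → Finset α) :
    partEntropy X Y = ∑ i, negMulLog ((#(Y i) : ℝ) / #X) := by
  simp only [partEntropy, negMulLog, neg_mul, sum_neg_distrib]

theorem condEntropy_eq_sum_negMulLog [DecidableEq α] (X Xl : Finset α) (Y : Fin k → Finset α)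
    (Z : Fin m → Finset α) :
    condEntropy X Xl Y Z
      = ∑ i, (#(Y i) : ℝ) / #X * ∑ j, negMulLog ((#(Y i ∩ Z j) : ℝ) / #(Y i ∩ Xl)) := by
  simp only [condEntropy, negMulLog, neg_mul, sum_neg_distrib]

theorem partEntropy_add_condEntropy [DecidableEq α] {X Xl : Finset α} {Y : Fin k → Finset α}
    {Z : Fin m → Finset α} (hZd : Pairwise (Disjoint on Z)) (hZu : univ.biUnion Z = Xl)
    (hprop : ∀ i, (#(Y i) : ℝ) / #X = #(Y i ∩ Xl) / #Xl) :
    partEntropy X Y + condEntropy X Xl Y Z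
      = ∑ i, ∑ j, negMulLog ((#(Y i ∩ Z j) : ℝ) / #Xl) := by
  rw [partEntropy_eq_sum_negMulLog, condEntropy_eq_sum_negMulLog, ← sum_add_distrib]
  refine sum_congr rfl fun i _ => ?_
  have hsum : ∑ j, (#(Y i ∩ Z j) : ℝ) = #(Y i ∩ Xl) := by
    rw [← hZu, card_inter_biUnion (hZd.set_pairwise _)]
    push_cast
    rfl
  rw [sum_negMulLog_div_eq _ (fun j _ => Nat.cast_nonneg _) (#Xl : ℝ), hsum, hprop i]

theorem partEntropy_add_condEntropy_of_refines [DecidableEq α] {X Xl : Finset α}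
    {Y : Fin k → Finset α} {Z : Fin m → Finset α} (hYd : Pairwise (Disjoint on Y))
    (hZd : Pairwise (Disjoint on Z)) (hZu : univ.biUnion Z = Xl) (hZY : ∀ j, ∃ i, Z j ⊆ Y i)
    (hprop : ∀ i, (#(Y i) : ℝ) / #X = #(Y i ∩ Xl) / #Xl) :
    partEntropy X Y + condEntropy X Xl Y Z = ∑ j, negMulLog ((#(Z j) : ℝ) / #Xl) := by
  rw [partEntropy_add_condEntropy hZd hZu hprop,
    sum_sum_card_inter_of_refines hYd hZY (fun n => negMulLog ((n : ℝ) / #Xl)) (by simp)]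

end Entropy

theorem robust_to_random_labeling_beta_lt_one_general {α : Type*} [DecidableEq α]
    (X Xl : Finset α)
    {k k' m : ℕ} (Y : Fin k → Finset α) (tY : Fin k' → Finset α) (Z : Fin m → Finset α)
    (hYd : ∀ i i', i ≠ i' → Disjoint (Y i) (Y i'))
    (hZd : ∀ j j', j ≠ j' → Disjoint (Z j) (Z j'))
    (hZu : Finset.univ.biUnion Z = Xl)
    (hcoarse : ∀ j, ∃ i, Z j ⊆ Y i)
    (hprop : ∀ i, ((Y i).card : ℝ) / X.card = ((Y i ∩ Xl).card : ℝ) / Xl.card)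
    (g : Fin k → Fin k')
    (htY : ∀ r, tY r = (Finset.univ.filter (fun i => g i = r)).biUnion Y)
    (hH : partEntropy X tY < partEntropy X Y)
    (β : ℝ) (hβ : β < 1) :
    partEntropy X tY + β * condEntropy X Xl tY Z
      < partEntropy X Y + β * condEntropy X Xl Y Z := by
  obtain rfl : tY = coarsening Y g := funext htY
  have hchain : partEntropy X (coarsening Y g) + condEntropy X Xl (coarsening Y g) Z
      = partEntropy X Y + condEntropy X Xl Y Z := by
    rw [partEntropy_add_condEntropy_of_refines hYd hZd hZu hcoarse hprop,
      partEntropy_add_condEntropy_of_refines (coarsening_pairwise_disjoint hYd g) hZd hZu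
        (coarsening_refines hcoarse g) (coarsening_proportional hYd hprop g)]
  nlinarith [mul_pos (sub_pos.2 hβ) (sub_pos.2 hH)]

theorem robust_to_random_labeling_beta_lt_one {α : Type*} [DecidableEq α]
    (X Xl : Finset α) (hsub : Xl ⊆ X) (hXl : Xl.Nonempty)
    {k k' m : ℕ} (Y : Fin k → Finset α) (tY : Fin k' → Finset α) (Z : Fin m → Finset α)
    (hYd : ∀ i i', i ≠ i' → Disjoint (Y i) (Y i'))
    (hYu : Finset.univ.biUnion Y = X)
    (hZd : ∀ j j', j ≠ j' → Disjoint (Z j) (Z j'))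
    (hZu : Finset.univ.biUnion Z = Xl)
    (hcoarse : ∀ j, ∃ i, Z j ⊆ Y i)
    (hprop : ∀ i, ((Y i).card : ℝ) / X.card = ((Y i ∩ Xl).card : ℝ) / Xl.card)
    (g : Fin k → Fin k')
    (htY : ∀ r, tY r = (Finset.univ.filter (fun i => g i = r)).biUnion Y)
    (hH : partEntropy X tY < partEntropy X Y)
    (β : ℝ) (hβ : β < 1) :
    partEntropy X tY + β * condEntropy X Xl tY Z
      < partEntropy X Y + β * condEntropy X Xl Y Z :=
  robust_to_random_labeling_beta_lt_one_general X Xl Y tY Z hYd hZd hZu hcoarse hprop g htY hH β hβ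
end
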